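/- Let n ≥ 1 and m ≥ 1, and let A₁, …, A_m be n × n real symmetric matrices. Then the maximum over y in the simplex S_m of (min over X in the spectraplex Δ_n of ∑_{i=1}^m y_i (A_i • X)) equals the supremum of { t ∈ ℝ : there exists y ∈ S_m with ∑_{i=1}^m y_i A_i − t·I_n positive semidefinite }, and this supremum is attained. -/

import Mathlib

open Matrix BigOperators

/-- The spectraplex: symmetric positive semidefinite `n × n` real matrices of trace one. -/
def spectraplex (n : ℕ) : Set (Matrix (Fin n) (Fin n) ℝ) :=
  {X | X.IsSymm ∧ X.PosSemidef ∧ X.trace = 1}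

/-- The unit simplex in `ℝ^m`. -/
def unitSimplex (m : ℕ) : Set (Fin m → ℝ) :=
  {y | (∑ i, y i) = 1 ∧ ∀ i, 0 ≤ y i}

/-! For symmetric `B`, `B - t • 1` is positive semidefinite iff `t ≤ Tr (B X)` for every `X` in
the spectraplex: one direction because the trace of a product of positive semidefinite matrices
is nonnegative, the other by testing on the rank-one matrices `x xᵀ / ‖x‖²`. Hence, writing
`f y = min_{X ∈ Δₙ} Tr ((∑ yᵢ Aᵢ) X)` (attained since `Δₙ` is compact), the first set is the range
of `f` on `Sₘ` and the second is its lower closure. Being an infimum of functions linear in `y`,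
`f` is upper semicontinuous, so it attains its maximum on the compact simplex, and that maximum is
the greatest element of both sets. -/

namespace Matrix

variable {ι : Type*} [Fintype ι]

open scoped MatrixOrder ComplexOrder in
lemma PosSemidef.trace_mul_nonneg {𝕜 : Type*} [RCLike 𝕜] {A X : Matrix ι ι 𝕜}
    (hA : A.PosSemidef) (hX : X.PosSemidef) : 0 ≤ (A * X).trace := by
  classical
  obtain ⟨C, rfl⟩ := CStarAlgebra.nonneg_iff_eq_star_mul_self.mp hX.nonneg
  rw [star_eq_conjTranspose, ← Matrix.mul_assoc, trace_mul_comm]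
  simpa only [Matrix.mul_assoc] using (hA.mul_mul_conjTranspose_same C).trace_nonneg

lemma PosSemidef.abs_apply_le_trace {X : Matrix ι ι ℝ} (hX : X.PosSemidef) (i j : ι) :
    |X i j| ≤ X.trace := by
  classical
  have hquad (c : ℝ) : 0 ≤ X i i + 2 * c * X i j + c ^ 2 * X j j := by
    have h := hX.dotProduct_mulVec_nonneg (Pi.single i 1 + c • Pi.single j 1)
    have hji : X j i = X i j := hX.isHermitian.apply i j
    simp only [mulVec_add, mulVec_smul, add_dotProduct, dotProduct_add, smul_dotProduct,
      dotProduct_smul, star_trivial, mulVec_single_one, single_dotProduct, col_apply,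
      smul_eq_mul, one_mul, hji] at h
    linarith
  have hdiag (k : ι) : X k k ≤ X.trace :=
    Finset.single_le_sum (f := fun k => X k k) (fun l _ => hX.diag_nonneg) (Finset.mem_univ k)
  rw [abs_le]
  constructor <;> linarith [hquad 1, hquad (-1), hdiag i, hdiag j]

lemma isClosed_setOf_posSemidef : IsClosed {X : Matrix ι ι ℝ | X.PosSemidef} := by
  have : {X : Matrix ι ι ℝ | X.PosSemidef} =
      {X | Xᴴ = X} ∩ ⋂ x : ι → ℝ, {X | 0 ≤ star x ⬝ᵥ X *ᵥ x} := by
    ext X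
    simp [posSemidef_iff_dotProduct_mulVec, IsHermitian]
  rw [this]
  exact (isClosed_eq (by fun_prop) continuous_id).inter <| isClosed_iInter fun x =>
    isClosed_le continuous_const (continuous_const.dotProduct (by fun_prop))

lemma trace_mul_vecMulVec_self {R : Type*} [CommRing R] (B : Matrix ι ι R) (x : ι → R) :
    (B * vecMulVec x x).trace = x ⬝ᵥ B *ᵥ x := by
  rw [mul_vecMulVec, trace_vecMulVec, dotProduct_comm]

end Matrix

section Spectraplex

variable {n : ℕ}

lemma isCompact_spectraplex : IsCompact (spectraplex n) := by
  have hbox : IsCompact (Set.univ.pi fun _ : Fin n => Set.univ.pi fun _ : Fin n =>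
      Set.Icc (-1 : ℝ) 1) :=
    isCompact_univ_pi fun _ => isCompact_univ_pi fun _ => isCompact_Icc
  refine hbox.of_isClosed_subset ?_ fun X hX i _ j _ => ?_
  · exact (isClosed_eq continuous_id.matrix_transpose continuous_id).inter
      (isClosed_setOf_posSemidef.inter (isClosed_eq continuous_id.matrix_trace continuous_const))
  · rw [Set.mem_Icc, ← abs_le, ← hX.2.2]
    exact hX.2.1.abs_apply_le_trace i j

lemma spectraplex_nonempty (hn : 1 ≤ n) : (spectraplex n).Nonempty := by
  refine ⟨(n : ℝ)⁻¹ • 1, isSymm_one.smul _, PosSemidef.one.smul (by positivity), ?_⟩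
  rw [trace_smul, trace_one, Fintype.card_fin, smul_eq_mul, inv_mul_cancel₀ (by positivity)]

lemma inv_dotProduct_smul_vecMulVec_mem_spectraplex {x : Fin n → ℝ} (hx : x ≠ 0) :
    (x ⬝ᵥ x)⁻¹ • vecMulVec x x ∈ spectraplex n := by
  have hpos : 0 < x ⬝ᵥ x := by simpa using dotProduct_star_self_pos_iff.2 hx
  refine ⟨(IsSymm.ext fun i j => ?_).smul _, ?_, ?_⟩
  · simp only [vecMulVec_apply, mul_comm]
  · simpa using (posSemidef_vecMulVec_self_star x).smul (inv_nonneg.2 hpos.le)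
  · rw [trace_smul, trace_vecMulVec, smul_eq_mul, inv_mul_cancel₀ hpos.ne']

theorem posSemidef_sub_smul_one_iff {B : Matrix (Fin n) (Fin n) ℝ} (hB : B.IsSymm) (t : ℝ) :
    (B - t • 1).PosSemidef ↔ ∀ X ∈ spectraplex n, t ≤ (B * X).trace := by
  constructor
  · intro h X hX
    have := h.trace_mul_nonneg hX.2.1
    rwa [sub_mul, trace_sub, smul_mul, one_mul, trace_smul, hX.2.2, smul_eq_mul, mul_one,
      sub_nonneg] at this
  · intro h
    refine .of_dotProduct_mulVec_nonneg (isHermitian_iff_isSymm.2 (hB.sub (isSymm_one.smul t)))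
      fun x => ?_
    rcases eq_or_ne x 0 with rfl | hx
    · simp
    have hpos : 0 < x ⬝ᵥ x := by simpa using dotProduct_star_self_pos_iff.2 hx
    have hx := h _ (inv_dotProduct_smul_vecMulVec_mem_spectraplex hx)
    rw [Matrix.mul_smul, trace_smul, trace_mul_vecMulVec_self, smul_eq_mul,
      le_inv_mul_iff₀ hpos] at hx
    rw [star_trivial, sub_mulVec, dotProduct_sub, smul_mulVec, one_mulVec, dotProduct_smul,
      smul_eq_mul, sub_nonneg, mul_comm]
    exact hx

/-- For symmetric `B` this is the least eigenvalue of `B`. -/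
noncomputable def spectraplexMin (B : Matrix (Fin n) (Fin n) ℝ) : ℝ :=
  ⨅ X : spectraplex n, (B * X).trace

lemma bddBelow_range_trace_mul_spectraplex (B : Matrix (Fin n) (Fin n) ℝ) :
    BddBelow (Set.range fun X : spectraplex n => (B * X).trace) := by
  have := isCompact_iff_compactSpace.mp (isCompact_spectraplex (n := n))
  exact (isCompact_range (by fun_prop)).bddBelow

lemma isLeast_spectraplexMin (hn : 1 ≤ n) (B : Matrix (Fin n) (Fin n) ℝ) :
    IsLeast {s | ∃ X ∈ spectraplex n, s = (B * X).trace} (spectraplexMin B) := by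
  obtain ⟨X₀, hX₀, hmin⟩ := isCompact_spectraplex.exists_isMinOn (spectraplex_nonempty hn)
    (f := fun X => (B * X).trace) (by fun_prop)
  rw [spectraplexMin, hmin.iInf_eq hX₀]
  exact ⟨⟨X₀, hX₀, rfl⟩, by rintro _ ⟨X, hX, rfl⟩; exact hmin hX⟩

theorem posSemidef_sub_smul_one_iff_le_spectraplexMin (hn : 1 ≤ n)
    {B : Matrix (Fin n) (Fin n) ℝ} (hB : B.IsSymm) (t : ℝ) :
    (B - t • 1).PosSemidef ↔ t ≤ spectraplexMin B := by
  have := (spectraplex_nonempty hn).to_subtype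
  rw [posSemidef_sub_smul_one_iff hB, spectraplexMin,
    le_ciInf_iff (bddBelow_range_trace_mul_spectraplex B), Subtype.forall]

lemma upperSemicontinuous_spectraplexMin :
    UpperSemicontinuous (spectraplexMin : Matrix (Fin n) (Fin n) ℝ → ℝ) :=
  upperSemicontinuous_ciInf bddBelow_range_trace_mul_spectraplex fun _ =>
    (by fun_prop : Continuous _).upperSemicontinuous

end Spectraplex

lemma unitSimplex_eq_stdSimplex (m : ℕ) : unitSimplex m = stdSimplex ℝ (Fin m) :=
  Set.ext fun _ => and_comm

/-- The maximum over `y` in the simplex of the (attained) minimum over the spectraplex of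
`∑ yᵢ (Aᵢ • X)` equals the supremum of `{t | ∃ y ∈ Sₘ, ∑ yᵢ Aᵢ - t Iₙ ⪰ 0}`,
and this supremum is attained. -/
theorem maximin_eq_sup_shift_posSemidef {n m : ℕ} (hn : 1 ≤ n) (hm : 1 ≤ m)
    (A : Fin m → Matrix (Fin n) (Fin n) ℝ) (hA : ∀ i, (A i).IsSymm) :
    ∃ v : ℝ,
      IsGreatest {r : ℝ | ∃ y ∈ unitSimplex m,
        IsLeast {s : ℝ | ∃ X ∈ spectraplex n, s = ∑ i, y i * (A i * X).trace} r} v ∧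
      IsGreatest {t : ℝ | ∃ y ∈ unitSimplex m,
        ((∑ i, y i • A i) - t • (1 : Matrix (Fin n) (Fin n) ℝ)).PosSemidef} v := by
  set f : (Fin m → ℝ) → ℝ := fun y => spectraplexMin (∑ i, y i • A i)
  have hsymm (y : Fin m → ℝ) : (∑ i, y i • A i).IsSymm :=
    (transpose_sum _ _).trans (Finset.sum_congr rfl fun i _ => ((hA i).smul (y i)).eq)
  have hleast (y : Fin m → ℝ) :
      IsLeast {s | ∃ X ∈ spectraplex n, s = ∑ i, y i * (A i * X).trace} (f y) := by
    simpa only [Matrix.sum_mul, trace_sum, smul_mul, trace_smul, smul_eq_mul] using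
      isLeast_spectraplexMin hn (∑ i, y i • A i)
  have hf : UpperSemicontinuous f := upperSemicontinuous_spectraplexMin.comp <| by
    fun_prop
  obtain ⟨y₀, hy₀, hmax⟩ := (hf.upperSemicontinuousOn _).exists_isMaxOn
    ⟨_, single_mem_stdSimplex ℝ ⟨0, hm⟩⟩ (isCompact_stdSimplex ℝ (Fin m))
  rw [← unitSimplex_eq_stdSimplex] at hy₀ hmax
  refine ⟨f y₀, ⟨⟨y₀, hy₀, hleast y₀⟩, ?_⟩,
    ⟨y₀, hy₀, (posSemidef_sub_smul_one_iff_le_spectraplexMin hn (hsymm y₀) _).2 le_rfl⟩, ?_⟩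
  · rintro r ⟨y, hy, hr⟩
    exact (hr.unique (hleast y)).trans_le (hmax hy)
  · rintro t ⟨y, hy, ht⟩
    exact ((posSemidef_sub_smul_one_iff_le_spectraplexMin hn (hsymm y) t).1 ht).trans (hmax hy)
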